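/- Key claim in computing the Hausdorff rank of L_T for a fat well-founded tree T ⊆ (2Ω)^{<ω}: for all ρ ∈ T, all n ∈ ω, and all ordinals α ≥ 1, the elements ρ⌢n and ρ⌢(n+1) of T⁺∪(descendant-types) lie in the same class of the α-th Hausdorff iterate of L_T if and only if the rank of ρ⌢(n,n+1) in T is strictly less than α (with the convention that r_T(σ) = 0 if σ ∉ T). -/

import Mathlib

/-- The symbols `ω ∪ Ω ∪ {∞}`: `fin n` is the natural number `n`, `pair n` is the
pair `(n, n+1) ∈ Ω`, and `infty` is `∞`. -/
inductive Symb : Type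
  | fin : ℕ → Symb
  | pair : ℕ → Symb
  | infty : Symb
deriving DecidableEq

/-- Position of a symbol in the order `0 < (0,1) < 1 < (1,2) < 2 < ⋯ < ∞`. -/
def Symb.val : Symb → WithTop ℕ
  | .fin n => ((2 * n : ℕ) : WithTop ℕ)
  | .pair n => ((2 * n + 1 : ℕ) : WithTop ℕ)
  | .infty => ⊤

theorem Symb.val_injective : Function.Injective Symb.val := by
  rintro (n | n | _) (m | m | _) h <;>
    simp only [Symb.val] at h <;>
    first
      | rfl
      | (norm_cast at h <;> first | (congr 1; omega) | (exact absurd h (by omega)))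

/-- The linear order `0 < (0,1) < 1 < (1,2) < 2 < ⋯ < ∞` on `ω ∪ Ω ∪ {∞}`. -/
instance : LinearOrder Symb := LinearOrder.lift' Symb.val Symb.val_injective

noncomputable section

variable {α : Type*}

/-- A tree on `α`: a set of finite sequences closed under initial segments. -/
def IsTree (T : Set (List α)) : Prop :=
  ∀ σ ∈ T, ∀ τ : List α, τ <+: σ → τ ∈ T

/-- `σ` lies on an infinite path of `T`. -/
def IllNode (T : Set (List α)) (σ : List α) : Prop :=
  ∃ f : ℕ → α, ∀ n : ℕ, σ ++ List.ofFn (fun i : Fin n => f i) ∈ T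

/-- `T` is well-founded: it has no infinite path. -/
def WellFoundedTree (T : Set (List α)) : Prop := ¬ IllNode T []

/-- The set of nodes of `T` removed within `γ` rounds of leaf-removal:
a node is removed by stage `γ` if each of its children was removed at some earlier stage. -/
def prunedAt (T : Set (List α)) (γ : Ordinal.{0}) : Set (List α) :=
  Ordinal.lt_wf.fix (C := fun _ => Set (List α))
    (fun γ ih =>
      {σ | σ ∈ T ∧ ∀ a : α, σ ++ [a] ∈ T → ∃ β : Ordinal.{0}, ∃ h : β < γ, σ ++ [a] ∈ ih β h}) γ

open Classical in
/-- The rank of a node of `T`: nodes on an infinite path get rank `∞ = ⊤`;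
well-founded nodes get the paper's ordinal rank, so that leaves have rank `1` and
the rank of a node is computed from the stage at which leaf-removal removes it. -/
def erank (T : Set (List α)) (σ : List α) : WithTop Ordinal.{0} :=
  if IllNode T σ then ⊤
  else ((sInf {γ : Ordinal.{0} | σ ∈ prunedAt T γ} + 1 : Ordinal) : WithTop Ordinal.{0})

/-- `β < γ` for extended ranks, with the paper's convention that `∞ < ∞` is true. -/
def eLT (β γ : WithTop Ordinal.{0}) : Prop := β < γ ∨ (β = ⊤ ∧ γ = ⊤)

/-- `T` is fat: every node `σ ∈ T` of rank `α` has, for every (attained, i.e. `≥ 1`) rank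
`β < α`, infinitely many children in `T` of rank exactly `β`. -/
def FatTree (T : Set (List α)) : Prop :=
  ∀ σ ∈ T, ∀ β : WithTop Ordinal.{0}, 1 ≤ β → eLT β (erank T σ) →
    {a : α | σ ++ [a] ∈ T ∧ erank T (σ ++ [a]) = β}.Infinite

end

noncomputable section

/-- Given a relation `E` on a linear order, `hausdorffRel E a b` says that the closed
interval between `a` and `b` is covered by finitely many `E`-classes; when `E` is an
equivalence relation this is the pullback of the Hausdorff relation on the quotient. -/
def hausdorffRel {L : Type*} [LinearOrder L] (E : L → L → Prop) (a b : L) : Prop :=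
  ∃ s : Finset L, ∀ c : L, min a b ≤ c → c ≤ max a b → ∃ d ∈ s, E c d

/-- The transfinite iterates of the Hausdorff derivative relation on a linear order `L`:
`H_0` is equality, `H_{α+1}` is the pullback of the Hausdorff relation on the quotient
`L / H_α`, and at limits one takes unions. -/
def hausdorffIter (L : Type*) [LinearOrder L] (γ : Ordinal.{0}) : L → L → Prop :=
  Ordinal.limitRecOn (motive := fun _ => L → L → Prop) γ Eq
    (fun _ IH => hausdorffRel IH)
    (fun γ _ IH a b => ∃ β : Ordinal.{0}, ∃ h : β < γ, IH β h a b)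

/-- A linear order is scattered if the rationals do not order-embed into it. -/
def Scattered (L : Type*) [LinearOrder L] : Prop :=
  ¬ ∃ e : ℚ → L, ∀ q r : ℚ, q < r → e q < e r

end

/-- `T⁺ = {σ⌢a : σ ∈ T, σ⌢a ∉ T}` where `a` ranges over all symbols of `ω ∪ Ω ∪ {∞}`. -/
def Tplus (T : Set (List Symb)) : Set (List Symb) :=
  {l : List Symb | ∃ σ ∈ T, ∃ a : Symb, l = σ ++ [a] ∧ σ ++ [a] ∉ T}

open Classical in
/-- The rank of a node, with the convention that `r_T(σ) = 0` if `σ ∉ T`. -/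
noncomputable def erank0 (T : Set (List Symb)) (σ : List Symb) : WithTop Ordinal.{0} :=
  if σ ∈ T then erank T σ else 0

/-!
Write `σ = ρ⌢(n,n+1)`. Everything rests on the classes of every `H_α` being intervals.
The points of `L_T` strictly between `ρ⌢n` and `ρ⌢(n+1)` are exactly the points extending
`σ`. If `σ ∉ T` this leaves only `σ` itself, so the endpoints are `H_1`-related. If `σ ∈ T`
has rank `r`, the interval consists of `ρ⌢n`, the block `σ⌢0 < σ⌢(0,1) < σ⌢1 < ⋯`, then
`σ⌢∞` and `ρ⌢(n+1)`; by induction on the rank, consecutive points `σ⌢m`, `σ⌢(m+1)` of the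
block are `H_r`-related, so the interval meets only two `H_r`-classes and the endpoints are
`H_{r+1}`-related. Conversely, for `β < r` fatness provides infinitely many `m` with
`r_T(σ⌢(m,m+1)) ≥ β`, hence, by induction, infinitely many `m` for which `σ⌢m` and
`σ⌢(m+1)` are not `H_β`-related; the interval then meets infinitely many `H_β`-classes, so
the endpoints are not `H_{β+1}`-related.
-/

namespace Symb

theorem lt_iff_val_lt {a b : Symb} : a < b ↔ a.val < b.val := Iff.rfl

theorem le_iff_val_le {a b : Symb} : a ≤ b ↔ a.val ≤ b.val := Iff.rfl

@[simp] theorem fin_lt_fin {m n : ℕ} : fin m < fin n ↔ m < n := by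
  simp only [lt_iff_val_lt, val, Nat.cast_lt]; omega

@[simp] theorem fin_lt_pair {m n : ℕ} : fin m < pair n ↔ m ≤ n := by
  simp only [lt_iff_val_lt, val, Nat.cast_lt]; omega

@[simp] theorem pair_lt_fin {m n : ℕ} : pair m < fin n ↔ m < n := by
  simp only [lt_iff_val_lt, val, Nat.cast_lt]; omega

theorem le_infty (a : Symb) : a ≤ infty := le_iff_val_le.2 le_top

theorem fin_zero_le (a : Symb) : fin 0 ≤ a := by
  cases a <;> simp [le_iff_val_le, val]

theorem exists_lt_fin {a : Symb} (ha : a ≠ infty) : ∃ m, a < fin m := by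
  cases a with
  | fin m => exact ⟨m + 1, by simp⟩
  | pair m => exact ⟨m + 1, by simp⟩
  | infty => exact absurd rfl ha

theorem eq_fin_or_eq_pair {a : Symb} {k : ℕ} (h₁ : fin k ≤ a) (h₂ : a < fin (k + 1)) :
    a = fin k ∨ a = pair k := by
  cases a with
  | fin m =>
    simp only [le_iff_val_le, val, Nat.cast_le, fin_lt_fin] at h₁ h₂
    left; congr 1; omega
  | pair m =>
    simp only [le_iff_val_le, val, Nat.cast_le, pair_lt_fin] at h₁ h₂
    right; congr 1; omega
  | infty => exact absurd h₂ (not_lt.2 (le_infty _))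

end Symb

namespace List

variable {α : Type*} [LinearOrder α]

theorem append_lt_append_left_iff {l u v : List α} : l ++ u < l ++ v ↔ u < v := by
  induction l with
  | nil => rfl
  | cons a l ih => simpa using ih

theorem exists_eq_append_cons_of_lt_of_lt {ρ x : List α} {c d : α} (h₁ : ρ ++ [c] < x)
    (h₂ : x < ρ ++ [d]) :
    ∃ b y, x = ρ ++ b :: y ∧ c ≤ b ∧ b < d ∧ (b = c → y ≠ []) := by
  induction ρ generalizing x with
  | nil =>
    obtain _ | ⟨b, y⟩ := x
    · exact absurd h₁ (not_lt_nil _)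
    rw [nil_append, cons_lt_cons_iff] at h₁ h₂
    refine ⟨b, y, rfl, ?_, ?_, ?_⟩
    · rcases h₁ with h | ⟨rfl, -⟩
      exacts [h.le, le_rfl]
    · rcases h₂ with h | ⟨-, h⟩
      exacts [h, absurd h (not_lt_nil _)]
    · rintro rfl rfl
      rcases h₁ with h | ⟨-, h⟩
      exacts [lt_irrefl _ h, not_lt_nil _ h]
  | cons a ρ ih =>
    obtain _ | ⟨b, y⟩ := x
    · exact absurd h₁ (not_lt_nil _)
    rw [cons_append, cons_lt_cons_iff] at h₁ h₂
    rcases h₁ with h₁ | ⟨rfl, h₁⟩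
    · rcases h₂ with h₂ | ⟨rfl, -⟩
      exacts [absurd (h₁.trans h₂) (lt_irrefl _), absurd h₁ (lt_irrefl _)]
    · rcases h₂ with h₂ | ⟨-, h₂⟩
      · exact absurd h₂ (lt_irrefl _)
      obtain ⟨b', y', rfl, h⟩ := ih h₁ h₂
      exact ⟨b', y', rfl, h⟩

end List

section Hausdorff

variable {L : Type*} [LinearOrder L]

structure IsConvexEquivalence (E : L → L → Prop) : Prop extends Equivalence E where
  rel_of_mem_uIcc {a b c : L} : E a b → c ∈ Set.uIcc a b → E a c

theorem isConvexEquivalence_eq : IsConvexEquivalence (@Eq L) where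
  toEquivalence := eq_equivalence
  rel_of_mem_uIcc := by
    rintro a _ c rfl hc
    rw [Set.uIcc_self, Set.mem_singleton_iff] at hc
    exact hc.symm

theorem hausdorffRel_iff_uIcc {E : L → L → Prop} {a b : L} :
    hausdorffRel E a b ↔ ∃ s : Finset L, ∀ c ∈ Set.uIcc a b, ∃ d ∈ s, E c d :=
  exists_congr fun _ => ⟨fun h c hc => h c hc.1 hc.2, fun h c h₁ h₂ => h c ⟨h₁, h₂⟩⟩

theorem hausdorffRel_of_forall_rel_or_rel {E : L → L → Prop} {a b : L}
    (h : ∀ c ∈ Set.uIcc a b, E c a ∨ E c b) : hausdorffRel E a b := by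
  classical
  refine hausdorffRel_iff_uIcc.2 ⟨{a, b}, fun c hc => ?_⟩
  rcases h c hc with h | h
  exacts [⟨a, by simp, h⟩, ⟨b, by simp, h⟩]

theorem hausdorffRel_eq_of_finite {a b : L} (h : (Set.uIcc a b).Finite) :
    hausdorffRel Eq a b :=
  hausdorffRel_iff_uIcc.2 ⟨h.toFinset, fun c hc => ⟨c, h.mem_toFinset.2 hc, rfl⟩⟩

namespace IsConvexEquivalence

variable {E : L → L → Prop} (hE : IsConvexEquivalence E)
include hE

theorem hausdorffRel_of_rel {a b : L} (h : E a b) : hausdorffRel E a b :=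
  hausdorffRel_of_forall_rel_or_rel fun _ hc => .inl (hE.symm (hE.rel_of_mem_uIcc h hc))

theorem hausdorffRel : IsConvexEquivalence (_root_.hausdorffRel E) where
  refl _ := hE.hausdorffRel_of_rel (hE.refl _)
  symm {a b} h := by
    rw [hausdorffRel_iff_uIcc, Set.uIcc_comm] at h
    exact hausdorffRel_iff_uIcc.2 h
  trans {a b c} hab hbc := by
    classical
    obtain ⟨s, hs⟩ := hausdorffRel_iff_uIcc.1 hab
    obtain ⟨t, ht⟩ := hausdorffRel_iff_uIcc.1 hbc
    refine hausdorffRel_iff_uIcc.2 ⟨s ∪ t, fun x hx => ?_⟩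
    rcases Set.uIcc_subset_uIcc_union_uIcc hx with hx | hx
    · obtain ⟨d, hd, h⟩ := hs x hx
      exact ⟨d, Finset.mem_union_left _ hd, h⟩
    · obtain ⟨d, hd, h⟩ := ht x hx
      exact ⟨d, Finset.mem_union_right _ hd, h⟩
  rel_of_mem_uIcc {a b c} hab hc := by
    obtain ⟨s, hs⟩ := hausdorffRel_iff_uIcc.1 hab
    exact hausdorffRel_iff_uIcc.2
      ⟨s, fun x hx => hs x (Set.uIcc_subset_uIcc Set.left_mem_uIcc hc hx)⟩

/-- Pigeonhole: a finite cover would put two points `q m < q m'` with `m ∈ M` in one class,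
and that class would then contain `q (m + 1)`. -/
theorem not_hausdorffRel_of_infinite {a b : L} {q : ℕ → L} (hq : Monotone q)
    (hqab : ∀ m, q m ∈ Set.uIcc a b) {M : Set ℕ} (hM : M.Infinite)
    (hMq : ∀ m ∈ M, ¬ E (q m) (q (m + 1))) : ¬ _root_.hausdorffRel E a b := by
  rintro ⟨s, hs⟩
  choose f hfs hf using fun m => hs (q m) (hqab m).1 (hqab m).2
  obtain ⟨m, hm, m', -, hmm', hfm⟩ :=
    hM.exists_lt_map_eq_of_mapsTo (fun m _ => hfs m) s.finite_toSet
  have hqq : E (q m) (q m') := hE.trans (hf m) (hfm ▸ hE.symm (hf m'))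
  exact hMq m hm (hE.rel_of_mem_uIcc hqq (Set.Icc_subset_uIcc ⟨hq m.le_succ, hq hmm'⟩))

end IsConvexEquivalence

theorem isConvexEquivalence_biUnion {ι : Type*} [LinearOrder ι] {E : ι → L → L → Prop}
    {s : Set ι} (hs : s.Nonempty) (hE : ∀ i ∈ s, IsConvexEquivalence (E i))
    (hmono : MonotoneOn E s) : IsConvexEquivalence fun a b => ∃ i ∈ s, E i a b where
  refl a := ⟨hs.some, hs.some_mem, (hE _ hs.some_mem).refl a⟩
  symm := fun ⟨i, hi, h⟩ => ⟨i, hi, (hE i hi).symm h⟩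
  trans := by
    rintro a b c ⟨i, hi, hab⟩ ⟨j, hj, hbc⟩
    rcases le_total i j with hij | hji
    · exact ⟨j, hj, (hE j hj).trans (hmono hi hj hij a b hab) hbc⟩
    · exact ⟨i, hi, (hE i hi).trans hab (hmono hj hi hji b c hbc)⟩
  rel_of_mem_uIcc := fun ⟨i, hi, h⟩ hc => ⟨i, hi, (hE i hi).rel_of_mem_uIcc h hc⟩

theorem hausdorffIter_zero : hausdorffIter L 0 = Eq :=
  Ordinal.limitRecOn_zero _ _ _

theorem hausdorffIter_add_one (γ : Ordinal.{0}) :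
    hausdorffIter L (γ + 1) = hausdorffRel (hausdorffIter L γ) :=
  Ordinal.limitRecOn_add_one _ _ _ _

theorem hausdorffIter_of_isSuccLimit {γ : Ordinal.{0}} (hγ : Order.IsSuccLimit γ) :
    hausdorffIter L γ = fun a b => ∃ β ∈ Set.Iio γ, hausdorffIter L β a b := by
  unfold hausdorffIter
  rw [Ordinal.limitRecOn_limit _ _ _ _ hγ]
  simp only [Set.mem_Iio, exists_prop]

theorem isConvexEquivalence_hausdorffIter_and_hausdorffIter_le (γ : Ordinal.{0}) :
    IsConvexEquivalence (hausdorffIter L γ) ∧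
      ∀ β ≤ γ, hausdorffIter L β ≤ hausdorffIter L γ := by
  induction γ using Ordinal.limitRecOn with
  | zero =>
    refine ⟨hausdorffIter_zero (L := L) ▸ isConvexEquivalence_eq, fun β hβ => ?_⟩
    rw [nonpos_iff_eq_zero.1 hβ]
  | add_one γ ih =>
    rw [hausdorffIter_add_one]
    refine ⟨ih.1.hausdorffRel, fun β hβ => ?_⟩
    rcases hβ.lt_or_eq with hβ | rfl
    · exact fun a b h => ih.1.hausdorffRel_of_rel (ih.2 β (Order.lt_add_one_iff.1 hβ) a b h)
    · rw [hausdorffIter_add_one]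
  | limit γ hγ ih =>
    rw [hausdorffIter_of_isSuccLimit hγ]
    refine ⟨isConvexEquivalence_biUnion ⟨0, hγ.bot_lt⟩ (fun β hβ => (ih β hβ).1)
      (fun β _ β' hβ' h => (ih β' hβ').2 β h), fun β hβ a b h => ?_⟩
    rcases hβ.lt_or_eq with hβ | rfl
    · exact ⟨β, hβ, h⟩
    · rwa [hausdorffIter_of_isSuccLimit hγ] at h

theorem isConvexEquivalence_hausdorffIter (γ : Ordinal.{0}) :
    IsConvexEquivalence (hausdorffIter L γ) :=
  (isConvexEquivalence_hausdorffIter_and_hausdorffIter_le γ).1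

theorem hausdorffIter_mono : Monotone (hausdorffIter L) :=
  fun β γ h => (isConvexEquivalence_hausdorffIter_and_hausdorffIter_le γ).2 β h

theorem hausdorffIter_one_of_finite_Ioo {a b : L} (hab : a ≤ b) (h : (Set.Ioo a b).Finite) :
    hausdorffIter L 1 a b := by
  rw [← zero_add 1, hausdorffIter_add_one, hausdorffIter_zero]
  refine hausdorffRel_eq_of_finite (Set.uIcc_of_le hab ▸ Set.Finite.of_sdiff ?_ h)
  rw [Set.Icc_sdiff_Ioo_same hab]
  exact Set.toFinite _

end Hausdorff

section Rank

variable {α : Type} {T : Set (List α)}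

theorem prunedAt_eq (T : Set (List α)) (γ : Ordinal.{0}) :
    prunedAt T γ =
      {σ | σ ∈ T ∧ ∀ a, σ ++ [a] ∈ T → ∃ β < γ, σ ++ [a] ∈ prunedAt T β} := by
  rw [prunedAt, Ordinal.lt_wf.fix_eq]
  simp only [prunedAt, exists_prop]

noncomputable def pruningStage (T : Set (List α)) (σ : List α) : Ordinal.{0} :=
  sInf {γ | σ ∈ prunedAt T γ}

open Classical in
noncomputable def ordRank (T : Set (List α)) (σ : List α) : Ordinal.{0} :=
  if σ ∈ T then pruningStage T σ + 1 else 0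

theorem IllNode.nil (hTree : IsTree T) {σ : List α} (h : IllNode T σ) : IllNode T [] := by
  obtain ⟨f, hf⟩ := h
  let g : ℕ → α := fun i => if h : i < σ.length then σ[i] else f (i - σ.length)
  have hg (n : ℕ) :
      List.ofFn (fun j : Fin n => g j) = (σ ++ List.ofFn (fun j : Fin n => f j)).take n := by
    refine List.ext_getElem (by simp) fun i h₁ h₂ => ?_
    simp only [List.getElem_ofFn, List.getElem_take, g]
    rcases lt_or_ge i σ.length with h | h
    · simp [List.getElem_append_left h, h]
    · simp [List.getElem_append_right h, not_lt.2 h]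
  refine ⟨g, fun n => ?_⟩
  rw [List.nil_append, hg]
  exact hTree _ (hf n) _ (List.take_prefix _ _)

theorem illNode_of_forall_exists_append_mem {S : Set (List α)} (hST : S ⊆ T)
    (hS : ∀ σ ∈ S, ∃ a, σ ++ [a] ∈ S) {σ : List α} (hσ : σ ∈ S) : IllNode T σ := by
  choose F hF using fun τ : S => hS τ τ.2
  let g : ℕ → S := fun n => Nat.rec ⟨σ, hσ⟩ (fun _ τ => ⟨τ.1 ++ [F τ], hF τ⟩) n
  have hg : ∀ n, (g n).1 = σ ++ List.ofFn (fun i : Fin n => F (g i)) := by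
    intro n
    induction n with
    | zero => simp [g]
    | succ n ih =>
      change (g n).1 ++ [F (g n)] = _
      rw [ih, List.ofFn_succ', List.concat_eq_append, List.append_assoc]
      rfl
  exact ⟨fun n => F (g n), fun n => hg n ▸ hST (g n).2⟩

/-- If every child of `σ` were pruned, `σ` would be pruned one stage after all of them. -/
theorem exists_append_mem_forall_notMem_prunedAt {σ : List α} (hσ : σ ∈ T)
    (h : ∀ γ, σ ∉ prunedAt T γ) :
    ∃ a, σ ++ [a] ∈ T ∧ ∀ γ, σ ++ [a] ∉ prunedAt T γ := by
  classical
  by_contra! hc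
  choose g hg using hc
  let Γ : Ordinal.{0} := ⨆ a : α, if ha : σ ++ [a] ∈ T then g a ha else 0
  refine h (Γ + 1) ((prunedAt_eq T _).symm ▸ ⟨hσ, fun a ha => ⟨g a ha, ?_, hg a ha⟩⟩)
  refine Order.lt_add_one_iff.2 ?_
  have := le_ciSup (f := fun a => if ha : σ ++ [a] ∈ T then g a ha else 0)
    Ordinal.bddAbove_of_small a
  simpa [ha] using this

theorem exists_mem_prunedAt (hTree : IsTree T) (hwf : WellFoundedTree T) {σ : List α}
    (hσ : σ ∈ T) : ∃ γ, σ ∈ prunedAt T γ := by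
  by_contra! h
  refine hwf (IllNode.nil hTree (illNode_of_forall_exists_append_mem
    (S := {τ | τ ∈ T ∧ ∀ γ, τ ∉ prunedAt T γ}) (fun _ hτ => hτ.1)
    (fun _ hτ => exists_append_mem_forall_notMem_prunedAt hτ.1 hτ.2) ⟨hσ, h⟩))

theorem pruningStage_append_lt (hTree : IsTree T) (hwf : WellFoundedTree T) {σ : List α}
    (hσ : σ ∈ T) {a : α} (ha : σ ++ [a] ∈ T) :
    pruningStage T (σ ++ [a]) < pruningStage T σ := by
  have h : σ ∈ prunedAt T (pruningStage T σ) := csInf_mem (exists_mem_prunedAt hTree hwf hσ)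
  rw [prunedAt_eq] at h
  obtain ⟨β, hβ, haβ⟩ := h.2 a ha
  exact (csInf_le' haβ : pruningStage T (σ ++ [a]) ≤ β).trans_lt hβ

theorem ordRank_of_notMem {σ : List α} (hσ : σ ∉ T) : ordRank T σ = 0 := if_neg hσ

theorem one_le_ordRank {σ : List α} (hσ : σ ∈ T) : 1 ≤ ordRank T σ := by
  rw [ordRank, if_pos hσ]
  exact le_add_self

theorem ordRank_append_lt (hTree : IsTree T) (hwf : WellFoundedTree T) {σ : List α}
    (hσ : σ ∈ T) (a : α) : ordRank T (σ ++ [a]) < ordRank T σ := by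
  rw [ordRank, ordRank, if_pos hσ]
  split_ifs with ha
  · exact Order.lt_add_one_iff.2 (Order.add_one_le_iff.2 (pruningStage_append_lt hTree hwf hσ ha))
  · exact Order.lt_add_one_iff.2 zero_le

theorem erank_eq_ordRank (hTree : IsTree T) (hwf : WellFoundedTree T) {σ : List α}
    (hσ : σ ∈ T) : erank T σ = ordRank T σ := by
  rw [erank, if_neg fun h => hwf (h.nil hTree), ordRank, if_pos hσ]
  rfl

theorem erank0_eq_ordRank {T : Set (List Symb)} (hTree : IsTree T) (hwf : WellFoundedTree T)
    (σ : List Symb) : erank0 T σ = ordRank T σ := by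
  by_cases hσ : σ ∈ T
  · rw [erank0, if_pos hσ, erank_eq_ordRank hTree hwf hσ]
  · rw [erank0, if_neg hσ, ordRank_of_notMem hσ, WithTop.coe_zero]

end Rank

section Tplus

variable {T : Set (List Symb)}

theorem mem_tplus_append {σ : List Symb} (hσ : σ ∈ T) {a : Symb} (ha : σ ++ [a] ∉ T) :
    σ ++ [a] ∈ Tplus T :=
  ⟨σ, hσ, a, rfl, ha⟩

theorem notMem_of_mem_tplus {x : List Symb} (hx : x ∈ Tplus T) : x ∉ T := by
  obtain ⟨σ, -, a, rfl, ha⟩ := hx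
  exact ha

theorem mem_of_isPrefix_of_mem_tplus (hTree : IsTree T) {x τ : List Symb} (hx : x ∈ Tplus T)
    (hτ : τ <+: x) (hne : τ ≠ x) : τ ∈ T := by
  obtain ⟨σ, hσ, a, rfl, -⟩ := hx
  rcases List.prefix_concat_iff.1 hτ with rfl | hτ
  exacts [absurd rfl hne, hTree σ hσ τ hτ]

theorem mem_Ioo_of_append_pair_isPrefix {ρ x : List Symb} {k : ℕ}
    (h : ρ ++ [Symb.pair k] <+: x) :
    x ∈ Set.Ioo (ρ ++ [Symb.fin k]) (ρ ++ [Symb.fin (k + 1)]) := by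
  obtain ⟨y, rfl⟩ := h
  rw [List.append_assoc, List.singleton_append]
  exact ⟨List.append_left_lt (by simp [List.cons_lt_cons_iff]),
    List.append_left_lt (by simp [List.cons_lt_cons_iff])⟩

variable (hTree : IsTree T) (hΩ : ∀ σ ∈ T, ∀ s ∈ σ, ∃ n, s = Symb.pair n)

include hΩ in
theorem append_fin_notMem (σ : List Symb) (k : ℕ) : σ ++ [Symb.fin k] ∉ T := fun h => by
  obtain ⟨n, hn⟩ := hΩ _ h (Symb.fin k) (by simp)
  cases hn

include hΩ in
theorem append_infty_notMem (σ : List Symb) : σ ++ [Symb.infty] ∉ T := fun h => by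
  obtain ⟨n, hn⟩ := hΩ _ h Symb.infty (by simp)
  cases hn

def finPoint {σ : List Symb} (hσ : σ ∈ T) (k : ℕ) : {l // l ∈ Tplus T} :=
  ⟨σ ++ [Symb.fin k], mem_tplus_append hσ (append_fin_notMem hΩ σ k)⟩

theorem finPoint_strictMono {σ : List Symb} (hσ : σ ∈ T) : StrictMono (finPoint hΩ hσ) :=
  fun _ _ h => Subtype.mk_lt_mk.2 (List.append_left_lt (by simpa [List.cons_lt_cons_iff] using h))

include hTree hΩ

theorem append_pair_isPrefix_of_mem_tplus_of_lt_of_lt {ρ x : List Symb} {k : ℕ}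
    (hx : x ∈ Tplus T) (h₁ : ρ ++ [Symb.fin k] < x) (h₂ : x < ρ ++ [Symb.fin (k + 1)]) :
    ρ ++ [Symb.pair k] <+: x := by
  obtain ⟨b, y, rfl, hkb, hbk, hy⟩ := List.exists_eq_append_cons_of_lt_of_lt h₁ h₂
  rcases Symb.eq_fin_or_eq_pair hkb hbk with rfl | rfl
  · refine absurd (mem_of_isPrefix_of_mem_tplus hTree hx ⟨y, by simp⟩ ?_)
      (append_fin_notMem hΩ ρ k)
    simpa [eq_comm] using hy rfl
  · exact ⟨y, by simp⟩

theorem eq_append_pair_of_mem_tplus_of_lt_of_lt {ρ x : List Symb} {k : ℕ}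
    (hσ : ρ ++ [Symb.pair k] ∉ T) (hx : x ∈ Tplus T) (h₁ : ρ ++ [Symb.fin k] < x)
    (h₂ : x < ρ ++ [Symb.fin (k + 1)]) :
    x = ρ ++ [Symb.pair k] := by
  by_contra hne
  exact hσ (mem_of_isPrefix_of_mem_tplus hTree hx
    (append_pair_isPrefix_of_mem_tplus_of_lt_of_lt hTree hΩ hx h₁ h₂) (Ne.symm hne))

theorem not_lt_append_fin_zero {ρ x : List Symb} {k : ℕ} (hσ : ρ ++ [Symb.pair k] ∈ T)
    (hx : x ∈ Tplus T) (h₁ : ρ ++ [Symb.fin k] < x) :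
    ¬ x < ρ ++ [Symb.pair k] ++ [Symb.fin 0] := by
  intro h₂
  obtain ⟨y, rfl⟩ := append_pair_isPrefix_of_mem_tplus_of_lt_of_lt hTree hΩ hx h₁
    (h₂.trans (mem_Ioo_of_append_pair_isPrefix ⟨_, rfl⟩).2)
  rw [List.append_lt_append_left_iff] at h₂
  obtain _ | ⟨b, y⟩ := y
  · exact notMem_of_mem_tplus hx (by simpa using hσ)
  · rcases List.cons_lt_cons_iff.1 h₂ with h | ⟨-, h⟩
    exacts [(Symb.fin_zero_le b).not_gt h, List.not_lt_nil _ h]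

theorem not_append_infty_lt {ρ x : List Symb} {k : ℕ} (hx : x ∈ Tplus T)
    (h₂ : x < ρ ++ [Symb.fin (k + 1)]) : ¬ ρ ++ [Symb.pair k] ++ [Symb.infty] < x := by
  intro h₁
  obtain ⟨y, rfl⟩ := append_pair_isPrefix_of_mem_tplus_of_lt_of_lt hTree hΩ hx
    ((mem_Ioo_of_append_pair_isPrefix ⟨_, rfl⟩).1.trans h₁) h₂
  rw [List.append_lt_append_left_iff] at h₁
  obtain _ | ⟨b, y⟩ := y
  · exact List.not_lt_nil _ h₁
  rcases List.cons_lt_cons_iff.1 h₁ with h | ⟨rfl, hy⟩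
  · exact (Symb.le_infty b).not_gt h
  · refine append_infty_notMem hΩ (ρ ++ [Symb.pair k])
      (mem_of_isPrefix_of_mem_tplus hTree hx ⟨y, by simp⟩ ?_)
    rintro h
    simp only [List.append_cancel_left_eq, List.cons.injEq, true_and] at h
    simp [← h] at hy

theorem exists_le_append_fin_or_append_infty_le {ρ x : List Symb} {k : ℕ}
    (hσ : ρ ++ [Symb.pair k] ∈ T) (hx : x ∈ Tplus T) (h₁ : ρ ++ [Symb.fin k] ≤ x)
    (h₂ : x ≤ ρ ++ [Symb.fin (k + 1)]) :
    (∃ M, x ≤ ρ ++ [Symb.pair k] ++ [Symb.fin M]) ∨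
      ρ ++ [Symb.pair k] ++ [Symb.infty] ≤ x := by
  rcases h₁.eq_or_lt with rfl | h₁
  · exact .inl ⟨0, (mem_Ioo_of_append_pair_isPrefix ⟨_, rfl⟩).1.le⟩
  rcases h₂.eq_or_lt with rfl | h₂
  · exact .inr (mem_Ioo_of_append_pair_isPrefix ⟨_, rfl⟩).2.le
  obtain ⟨y, rfl⟩ := append_pair_isPrefix_of_mem_tplus_of_lt_of_lt hTree hΩ hx h₁ h₂
  obtain _ | ⟨b, y⟩ := y
  · exact absurd (by simpa using hσ) (notMem_of_mem_tplus hx)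
  by_cases hb : b = Symb.infty
  · subst hb
    have h : ρ ++ [Symb.pair k] ++ [Symb.infty] <+: ρ ++ [Symb.pair k] ++ Symb.infty :: y :=
      ⟨y, by simp⟩
    exact .inr (not_lt.1 h.le)
  · obtain ⟨M, hM⟩ := Symb.exists_lt_fin hb
    exact .inl ⟨M, (List.append_left_lt (List.cons_lt_cons_iff.2 (.inl hM))).le⟩

theorem hausdorffIter_one_of_append_pair_notMem {ρ : List Symb} (hρ : ρ ∈ T) {k : ℕ}
    (hσ : ρ ++ [Symb.pair k] ∉ T) :
    hausdorffIter {l // l ∈ Tplus T} 1 (finPoint hΩ hρ k) (finPoint hΩ hρ (k + 1)) :=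
  hausdorffIter_one_of_finite_Ioo (finPoint_strictMono hΩ hρ k.lt_succ_self).le
    ((Set.finite_singleton (⟨_, mem_tplus_append hρ hσ⟩ : {l // l ∈ Tplus T})).subset
      fun c hc => Subtype.ext (eq_append_pair_of_mem_tplus_of_lt_of_lt hTree hΩ hσ c.2 hc.1 hc.2))

theorem hausdorffIter_one_finPoint_finPoint_zero {ρ : List Symb} (hρ : ρ ∈ T) {k : ℕ}
    (hσ : ρ ++ [Symb.pair k] ∈ T) :
    hausdorffIter {l // l ∈ Tplus T} 1 (finPoint hΩ hρ k) (finPoint hΩ hσ 0) :=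
  hausdorffIter_one_of_finite_Ioo (mem_Ioo_of_append_pair_isPrefix ⟨_, rfl⟩).1.le
    (Set.finite_empty.subset fun c hc => not_lt_append_fin_zero hTree hΩ hσ c.2 hc.1 hc.2)

theorem hausdorffIter_one_append_infty_finPoint {ρ : List Symb} (hρ : ρ ∈ T) {k : ℕ}
    (hσ : ρ ++ [Symb.pair k] ∈ T) :
    hausdorffIter {l // l ∈ Tplus T} 1 ⟨_, mem_tplus_append hσ (append_infty_notMem hΩ _)⟩
      (finPoint hΩ hρ (k + 1)) :=
  hausdorffIter_one_of_finite_Ioo (mem_Ioo_of_append_pair_isPrefix ⟨_, rfl⟩).2.le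
    (Set.finite_empty.subset fun c hc => not_append_infty_lt hTree hΩ c.2 hc.2 hc.1)

end Tplus

section HausdorffRank

variable {T : Set (List Symb)} (hTree : IsTree T)
  (hΩ : ∀ σ ∈ T, ∀ s ∈ σ, ∃ n, s = Symb.pair n) (hwf : WellFoundedTree T)
include hTree hΩ hwf

theorem FatTree.infinite_setOf_le_ordRank_append (hfat : FatTree T) {σ : List Symb}
    (hσ : σ ∈ T) {β : Ordinal.{0}} (hβ : β < ordRank T σ) :
    {m | β ≤ ordRank T (σ ++ [Symb.pair m])}.Infinite := by
  rcases eq_or_ne β 0 with rfl | hβ₀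
  · simpa using Set.infinite_univ
  refine Set.Infinite.of_image Symb.pair (Set.Infinite.mono ?_ (hfat σ hσ β ?_ (.inl ?_)))
  · rintro a ⟨ha, hrank⟩
    obtain ⟨m, rfl⟩ := hΩ _ ha a (by simp)
    rw [erank_eq_ordRank hTree hwf ha, WithTop.coe_inj] at hrank
    exact ⟨m, hrank.ge, rfl⟩
  · exact_mod_cast Order.one_le_iff_ne_zero.2 hβ₀
  · rw [erank_eq_ordRank hTree hwf hσ]
    exact_mod_cast hβ

theorem hausdorffIter_ordRank_add_one {ρ : List Symb} (hρ : ρ ∈ T) (k : ℕ) :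
    hausdorffIter {l // l ∈ Tplus T} (ordRank T (ρ ++ [Symb.pair k]) + 1)
      (finPoint hΩ hρ k) (finPoint hΩ hρ (k + 1)) := by
  generalize hr : ordRank T (ρ ++ [Symb.pair k]) = r
  induction r using WellFoundedLT.induction generalizing ρ k with
  | _ r ih =>
  by_cases hσ : ρ ++ [Symb.pair k] ∈ T
  swap
  · rw [← hr, ordRank_of_notMem hσ, zero_add]
    exact hausdorffIter_one_of_append_pair_notMem hTree hΩ hρ hσ
  have hE := isConvexEquivalence_hausdorffIter (L := {l // l ∈ Tplus T}) r
  have hr₁ : 1 ≤ r := hr ▸ one_le_ordRank hσ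
  have hstep (m : ℕ) : hausdorffIter _ r (finPoint hΩ hσ m) (finPoint hΩ hσ (m + 1)) :=
    have hlt := hr ▸ ordRank_append_lt hTree hwf hσ (.pair m)
    hausdorffIter_mono (Order.add_one_le_of_lt hlt) _ _ (ih _ hlt hσ m rfl)
  have hchain (M : ℕ) : hausdorffIter _ r (finPoint hΩ hρ k) (finPoint hΩ hσ M) := by
    induction M with
    | zero =>
      exact hausdorffIter_mono hr₁ _ _
        (hausdorffIter_one_finPoint_finPoint_zero hTree hΩ hρ hσ)
    | succ M ih => exact hE.trans ih (hstep M)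
  have hlast :=
    hausdorffIter_mono hr₁ _ _ (hausdorffIter_one_append_infty_finPoint hTree hΩ hρ hσ)
  rw [hausdorffIter_add_one]
  refine hausdorffRel_of_forall_rel_or_rel fun c hc => ?_
  rw [Set.uIcc_of_le (finPoint_strictMono hΩ hρ k.lt_succ_self).le] at hc
  rcases exists_le_append_fin_or_append_infty_le hTree hΩ hσ c.2 hc.1 hc.2 with ⟨M, hM⟩ | hc'
  · exact .inl (hE.symm (hE.rel_of_mem_uIcc (hchain M) (Set.Icc_subset_uIcc ⟨hc.1, hM⟩)))
  · exact .inr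
      (hE.symm (hE.rel_of_mem_uIcc (hE.symm hlast) (Set.Icc_subset_uIcc' ⟨hc', hc.2⟩)))

theorem not_hausdorffIter_of_le_ordRank (hfat : FatTree T) {ρ : List Symb} (hρ : ρ ∈ T)
    (k : ℕ) {α : Ordinal.{0}} (hα : α ≤ ordRank T (ρ ++ [Symb.pair k])) :
    ¬ hausdorffIter {l // l ∈ Tplus T} α (finPoint hΩ hρ k) (finPoint hΩ hρ (k + 1)) := by
  induction α using WellFoundedLT.induction generalizing ρ k with
  | _ α ih =>
  rcases Ordinal.zero_or_succ_or_isSuccLimit α with rfl | ⟨β, rfl⟩ | hlim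
  · rw [hausdorffIter_zero]
    exact (finPoint_strictMono hΩ hρ k.lt_succ_self).ne
  · have hσ : ρ ++ [Symb.pair k] ∈ T := by
      by_contra hσ
      rw [ordRank_of_notMem hσ] at hα
      exact ((Order.lt_succ β).trans_le hα).not_ge zero_le
    rw [Order.succ_eq_add_one, hausdorffIter_add_one]
    refine (isConvexEquivalence_hausdorffIter β).not_hausdorffRel_of_infinite
      (finPoint_strictMono hΩ hσ).monotone
      (fun _ => Set.Icc_subset_uIcc (Set.Ioo_subset_Icc_self
        (mem_Ioo_of_append_pair_isPrefix ⟨_, rfl⟩)))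
      (hfat.infinite_setOf_le_ordRank_append hTree hΩ hwf hσ ((Order.lt_succ β).trans_le hα))
      fun m hm => ih β (Order.lt_succ β) hσ m hm
  · rw [hausdorffIter_of_isSuccLimit hlim]
    rintro ⟨β, hβ, h⟩
    exact ih β hβ hρ k (hβ.le.trans hα) h

end HausdorffRank

theorem hausdorff_iter_classes_vs_rank_general (T : Set (List Symb)) (hTree : IsTree T)
    (hdom : ∀ σ ∈ T, ∀ s ∈ σ, ∃ n : ℕ, s = Symb.pair (2 * n))
    (hwf : WellFoundedTree T) (hfat : FatTree T)
    (ρ : List Symb) (hρ : ρ ∈ T) (n : ℕ) (α : Ordinal.{0})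
    (h1 : ρ ++ [Symb.fin n] ∈ Tplus T) (h2 : ρ ++ [Symb.fin (n + 1)] ∈ Tplus T) :
    hausdorffIter {l : List Symb // l ∈ Tplus T} α ⟨ρ ++ [Symb.fin n], h1⟩
        ⟨ρ ++ [Symb.fin (n + 1)], h2⟩ ↔
      erank0 T (ρ ++ [Symb.pair n]) < (α : WithTop Ordinal.{0}) := by
  have hΩ : ∀ σ ∈ T, ∀ s ∈ σ, ∃ n, s = Symb.pair n :=
    fun σ hσ s hs => let ⟨m, hm⟩ := hdom σ hσ s hs; ⟨2 * m, hm⟩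
  rw [erank0_eq_ordRank hTree hwf, WithTop.coe_lt_coe]
  refine ⟨fun h => not_le.1 fun hle => ?_, fun h => ?_⟩
  · exact not_hausdorffIter_of_le_ordRank hTree hΩ hwf hfat hρ n hle h
  · exact hausdorffIter_mono (Order.add_one_le_of_lt h) _ _
      (hausdorffIter_ordRank_add_one hTree hΩ hwf hρ n)

/-- for a well-founded fat tree `T ⊆ (2Ω)^{<ω}`, for all `ρ ∈ T`, `n ∈ ω`
and ordinals `α ≥ 1`, the elements `ρ⌢n` and `ρ⌢(n+1)` of `L_T = T⁺` lie in the same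
class of the `α`-th Hausdorff iterate of `L_T` if and only if the rank of `ρ⌢(n,n+1)`
in `T` is strictly less than `α` (where `r_T(σ) = 0` if `σ ∉ T`). -/
theorem hausdorff_iter_classes_vs_rank (T : Set (List Symb)) (hTree : IsTree T)
    (hdom : ∀ σ ∈ T, ∀ s ∈ σ, ∃ n : ℕ, s = Symb.pair (2 * n))
    (hwf : WellFoundedTree T) (hfat : FatTree T)
    (ρ : List Symb) (hρ : ρ ∈ T) (n : ℕ) (α : Ordinal.{0}) (hα : 1 ≤ α)
    (h1 : ρ ++ [Symb.fin n] ∈ Tplus T) (h2 : ρ ++ [Symb.fin (n + 1)] ∈ Tplus T) :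
    hausdorffIter {l : List Symb // l ∈ Tplus T} α ⟨ρ ++ [Symb.fin n], h1⟩
        ⟨ρ ++ [Symb.fin (n + 1)], h2⟩ ↔
      erank0 T (ρ ++ [Symb.pair n]) < (α : WithTop Ordinal.{0}) :=
  hausdorff_iter_classes_vs_rank_general T hTree hdom hwf hfat ρ hρ n α h1 h2
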